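/- arXiv:1807.01403 — 4 statements merged into one kernel-verified Lean document; each statement's English description precedes it below -/
import Mathlib

section
/- Suppose F : ℝ → ℝ is C¹, F(m) = F(M) = 0 with m < M, F > 0 on (m, M), F'(m) > 0 and F'(M) < 0. Then there exists a nonconstant periodic C¹ function φ : ℝ → ℝ with m ≤ φ ≤ M satisfying (φ')² = F(φ) everywhere. -/
/-!
Factor `F x = (x - m) * (M - x) * g x` with `g` continuous, and positive on `[m, M]` because the
zeros are simple. The ansatz `φ = c + r sin ψ`, with `c ± r = M, m`, gives
`φ'² = r² cos² ψ · ψ'²` and `F φ = r² cos² ψ · g φ`, so it suffices that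
`ψ' = √(g (c + r sin ψ))`. The right-hand side is positive, continuous and `2π`-periodic in `ψ`,
so this autonomous equation is solved by inverting the time map `θ ↦ ∫₀^θ 1 / √(g (c + r sin t))`,
and the solution advances by `2π` over each period `T` of the time map.
-/

open Filter Set Real Topology

section Factor

variable {𝕜 : Type*} [NontriviallyNormedField 𝕜] {f u : 𝕜 → 𝕜} {a b : 𝕜}

theorem hasDerivAt_of_forall_eq_sub_mul (hu : ContinuousAt u a) (h : ∀ x, f x = (x - a) * u x) :
    HasDerivAt f (u a) a := by
  have hslope : slope f a =ᶠ[𝓝[≠] a] u := by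
    filter_upwards [self_mem_nhdsWithin] with x hx
    rw [slope_def_field, h x, h a, sub_self, zero_mul, sub_zero,
      mul_div_cancel_left₀ _ (sub_ne_zero.2 hx)]
  exact hasDerivAt_iff_tendsto_slope.2 <| (hu.mono_left nhdsWithin_le_nhds).congr' hslope.symm

theorem exists_continuous_forall_eq_sub_mul_sub_mul (hab : a ≠ b) (hf : Continuous f)
    (ha : DifferentiableAt 𝕜 f a) (hb : DifferentiableAt 𝕜 f b) (hfa : f a = 0) (hfb : f b = 0) :
    ∃ q : 𝕜 → 𝕜, Continuous q ∧ ∀ x, f x = (x - a) * (x - b) * q x := by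
  have hkb : dslope f a b = 0 := by
    rw [dslope_of_ne _ hab.symm, slope_def_field, hfa, hfb, sub_zero, zero_div]
  set k := dslope f a
  have hk : Continuous k := continuous_iff_continuousAt.2 fun x => by
    rcases eq_or_ne x a with rfl | hx
    · exact continuousAt_dslope_same.2 ha
    · exact (continuousAt_dslope_of_ne hx).2 hf.continuousAt
  refine ⟨dslope k b, continuous_iff_continuousAt.2 fun x => ?_, fun x => ?_⟩
  · rcases eq_or_ne x b with rfl | hx
    · exact continuousAt_dslope_same.2 ((differentiableAt_dslope_of_ne hab.symm).2 hb)
    · exact (continuousAt_dslope_of_ne hx).2 hk.continuousAt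
  · have hfk : f x = (x - a) * k x := by simpa [hfa] using (sub_smul_dslope f a x).symm
    have hkq : k x = (x - b) * dslope k b x := by simpa [hkb] using (sub_smul_dslope k b x).symm
    rw [hfk, hkq, mul_assoc]

end Factor

theorem exists_continuous_pos_factor {F : ℝ → ℝ} {m M : ℝ} (hmM : m < M) (hF : Continuous F)
    (hFm : F m = 0) (hFM : F M = 0) (hFpos : ∀ x, m < x → x < M → 0 < F x)
    (hF'm : 0 < deriv F m) (hF'M : deriv F M < 0) :
    ∃ g : ℝ → ℝ, Continuous g ∧ (∀ x ∈ Icc m M, 0 < g x) ∧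
      ∀ x, F x = (x - m) * (M - x) * g x := by
  obtain ⟨q, hq, hFq⟩ := exists_continuous_forall_eq_sub_mul_sub_mul hmM.ne hF
    (differentiableAt_of_deriv_ne_zero hF'm.ne') (differentiableAt_of_deriv_ne_zero hF'M.ne)
    hFm hFM
  have hq_m : deriv F m = (m - M) * q m :=
    (hasDerivAt_of_forall_eq_sub_mul (u := fun x => (x - M) * q x) (by fun_prop) fun x => by
      rw [hFq, mul_assoc]).deriv
  have hq_M : deriv F M = (M - m) * q M :=
    (hasDerivAt_of_forall_eq_sub_mul (u := fun x => (x - m) * q x) (by fun_prop) fun x => by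
      rw [hFq]; ring).deriv
  refine ⟨fun x => -q x, hq.neg, fun x ⟨hmx, hxM⟩ => ?_, fun x => by rw [hFq]; ring⟩
  rcases hmx.eq_or_lt with rfl | hmx
  · nlinarith
  rcases hxM.eq_or_lt with rfl | hxM
  · nlinarith
  have := hFpos x hmx hxM
  rw [hFq] at this
  nlinarith [mul_pos (sub_pos.2 hmx) (sub_pos.2 hxM)]

theorem exists_orderIso_hasDerivAt_symm {H w : ℝ → ℝ} (hH : ∀ θ, HasDerivAt H (w θ) θ)
    (hw : ∀ θ, 0 < w θ) (hsurj : Function.Surjective H) :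
    ∃ e : ℝ ≃o ℝ, ⇑e = H ∧ ∀ z, HasDerivAt e.symm (w (e.symm z))⁻¹ z := by
  let e := (strictMono_of_deriv_pos fun θ => (hH θ).deriv ▸ hw θ).orderIsoOfSurjective H hsurj
  refine ⟨e, rfl, fun z => ?_⟩
  exact (hH _).of_local_left_inverse e.symm.continuous.continuousAt (hw _).ne'
    (Eventually.of_forall e.apply_symm_apply)

theorem Function.Periodic.exists_autonomous_solution {v : ℝ → ℝ} {p : ℝ}
    (hv : Function.Periodic v p) (hp : 0 < p) (hvc : Continuous v) (hpos : ∀ θ, 0 < v θ) :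
    ∃ ψ : ℝ → ℝ, ∃ T > 0, (∀ z, HasDerivAt ψ (v (ψ z)) z) ∧ (∀ z, ψ (z + T) = ψ z + p) ∧
      Function.Surjective ψ := by
  set w := fun θ => (v θ)⁻¹
  have hwc : Continuous w := hvc.inv₀ fun θ => (hpos θ).ne'
  have hw : ∀ θ, 0 < w θ := fun θ => inv_pos.2 (hpos θ)
  have hwp : Function.Periodic w p := fun θ => by simp only [w, hv θ]
  have hwi : ∀ s t, IntervalIntegrable w MeasureTheory.volume s t :=
    fun s t => hwc.intervalIntegrable s t
  set H := fun θ => ∫ t in 0..θ, w t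
  have hH : ∀ θ, HasDerivAt H (w θ) θ := fun θ => (hwc.integral_hasStrictDerivAt 0 θ).hasDerivAt
  have hHp : ∀ θ, H (θ + p) = H θ + H p := fun θ => by
    simpa only [zero_add] using hwp.intervalIntegral_add_eq_add 0 θ hwi
  have hsurj : Function.Surjective H :=
    (continuous_iff_continuousAt.2 fun θ => (hH θ).continuousAt).surjective
      (hwp.tendsto_atTop_intervalIntegral_of_pos' (hwi 0 p) hw hp)
      (hwp.tendsto_atBot_intervalIntegral_of_pos' (hwi 0 p) hw hp)
  obtain ⟨e, heH, he⟩ := exists_orderIso_hasDerivAt_symm hH hw hsurj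
  refine ⟨e.symm, H p, intervalIntegral.intervalIntegral_pos_of_pos (hwi 0 p) hw hp,
    fun z => by simpa only [w, inv_inv] using he z, fun z => ?_, e.symm.surjective⟩
  rw [e.symm_apply_eq, heH, hHp, ← heH, e.apply_symm_apply]

/-- Two simple zeros of F with F positive between them yield a smooth periodic wave. -/
theorem periodic_wave_existence (F : ℝ → ℝ) (m M : ℝ) (hmM : m < M)
    (hF : ContDiff ℝ 1 F)
    (hFm : F m = 0) (hFM : F M = 0)
    (hFpos : ∀ x, m < x → x < M → 0 < F x)
    (hF'm : 0 < deriv F m) (hF'M : deriv F M < 0) :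
    ∃ φ : ℝ → ℝ, ContDiff ℝ 1 φ ∧
      (∃ T : ℝ, 0 < T ∧ ∀ z, φ (z + T) = φ z) ∧
      (∃ z₁ z₂, φ z₁ ≠ φ z₂) ∧
      (∀ z, m ≤ φ z ∧ φ z ≤ M) ∧
      (∀ z, (deriv φ z) ^ 2 = F (φ z)) := by
  obtain ⟨g, hg, hgpos, hFg⟩ :=
    exists_continuous_pos_factor hmM hF.continuous hFm hFM hFpos hF'm hF'M
  set c := (m + M) / 2
  set r := (M - m) / 2
  have hcm : c - r = m := by ring
  have hcM : c + r = M := by ring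
  have hr : 0 < r := by linarith
  have hmem : ∀ θ, c + r * sin θ ∈ Icc m M := fun θ => by
    have h₁ : 0 ≤ r * (1 + sin θ) := mul_nonneg hr.le (by linarith [neg_one_le_sin θ])
    have h₂ : 0 ≤ r * (1 - sin θ) := mul_nonneg hr.le (by linarith [sin_le_one θ])
    constructor <;> linarith
  obtain ⟨ψ, T, hT, hψ, hψT, hψsurj⟩ :=
    (show Function.Periodic (fun θ => √(g (c + r * sin θ))) (2 * π) from
      fun θ => by simp only [sin_add_two_pi]).exists_autonomous_solution two_pi_pos
      (by fun_prop) fun θ => sqrt_pos.2 (hgpos _ (hmem θ))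
  set φ := fun z => c + r * sin (ψ z)
  have hφ : ∀ z, HasDerivAt φ (r * (cos (ψ z) * √(g (φ z)))) z := fun z =>
    (((hasDerivAt_sin (ψ z)).comp z (hψ z)).const_mul r).const_add c
  obtain ⟨z₁, hz₁⟩ := hψsurj (π / 2)
  obtain ⟨z₂, hz₂⟩ := hψsurj (-(π / 2))
  refine ⟨φ, ?_, ⟨T, hT, fun z => by simp only [φ, hψT, sin_add_two_pi]⟩, ⟨z₁, z₂, ?_⟩,
    fun z => hmem (ψ z), fun z => ?_⟩
  · have hψc : Continuous ψ := continuous_iff_continuousAt.2 fun z => (hψ z).continuousAt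
    refine contDiff_one_iff_deriv.2 ⟨fun z => (hφ z).differentiableAt, ?_⟩
    rw [funext fun z => (hφ z).deriv]
    fun_prop
  · simp only [φ, hz₁, hz₂, sin_pi_div_two, sin_neg]
    linarith
  · have hsq : (φ z - m) * (M - φ z) = (r * cos (ψ z)) ^ 2 := by
      rw [← hcm, ← hcM]; linear_combination (-r ^ 2) * sin_sq_add_cos_sq (ψ z)
    rw [(hφ z).deriv, hFg, hsq, mul_pow, mul_pow, sq_sqrt (hgpos _ (hmem (ψ z))).le]
    ring
end

section
/- Suppose F : ℝ → ℝ is C¹ on a neighborhood of [m, ∞), F(m) = 0, F'(m) ≠ 0, and F(φ) > 0 for all φ > m. Then there is no bounded C¹ solution φ : ℝ → ℝ of (φ')² = F(φ) with φ(z) > m for all z and φ nonconstant. -/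
/-!
As `F > 0` above `m` and `φ > m`, the derivative `φ'` never vanishes, so by Darboux's
theorem it has constant sign; reflecting `z ↦ -z` if necessary, `φ` is strictly increasing.
Being bounded, `φ` converges to some `L > m` at `+∞`, and then `(φ')² = F(φ) → F(L) > 0`.
A derivative with a positive limit forces `φ → +∞`, a contradiction.
-/

open Filter Set Topology

theorem tendsto_atTop_of_tendsto_deriv_pos {f : ℝ → ℝ} (hf : Differentiable ℝ f) {d : ℝ}
    (hd : 0 < d) (hf' : Tendsto (deriv f) atTop (𝓝 d)) : Tendsto f atTop atTop := by
  obtain ⟨Z, hZ⟩ := eventually_atTop.1 (hf'.eventually (eventually_ge_nhds (half_lt_self hd)))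
  have hgrowth : ∀ x ≥ Z, f Z + d / 2 * (x - Z) ≤ f x := fun x hx => by
    have := (convex_Ici Z).mul_sub_le_image_sub_of_le_deriv hf.continuous.continuousOn
      hf.differentiableOn (fun y hy => hZ y (interior_subset hy)) Z self_mem_Ici x hx hx
    linarith
  refine tendsto_atTop_mono' _ (eventually_atTop.2 ⟨Z, hgrowth⟩) ?_
  exact tendsto_atTop_add_const_left _ _
    ((tendsto_atTop_add_const_right _ _ tendsto_id).const_mul_atTop (half_pos hd))

theorem not_bddAbove_range_of_sq_deriv_eq_of_deriv_pos {F : ℝ → ℝ} {m : ℝ}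
    (hF : ContinuousOn F (Ici m)) (hFpos : ∀ x, m < x → 0 < F x) {φ : ℝ → ℝ}
    (hφ : Differentiable ℝ φ) (hode : ∀ z, deriv φ z ^ 2 = F (φ z)) (hgt : ∀ z, m < φ z)
    (hpos : ∀ z, 0 < deriv φ z) : ¬ BddAbove (range φ) := by
  intro hbdd
  set L := ⨆ z, φ z
  have hφL : Tendsto φ atTop (𝓝 L) :=
    tendsto_atTop_ciSup (strictMono_of_deriv_pos hpos).monotone hbdd
  have hmL : m < L := (hgt 0).trans_le (le_ciSup hbdd 0)
  have hφ'L : Tendsto (deriv φ) atTop (𝓝 √(F L)) := by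
    have := ((hF.continuousAt (Ici_mem_nhds hmL)).tendsto.comp hφL).sqrt
    convert this using 2 with z
    rw [Function.comp_apply, ← hode, Real.sqrt_sq (hpos z).le]
  exact not_tendsto_nhds_of_tendsto_atTop
    (tendsto_atTop_of_tendsto_deriv_pos hφ (Real.sqrt_pos.2 (hFpos L hmL)) hφ'L) L hφL

theorem no_bounded_wave_above_simple_zero_general (F : ℝ → ℝ) (m : ℝ)
    (hF : ContDiffOn ℝ 1 F (Set.Ici m))
    (hFpos : ∀ x, m < x → 0 < F x) :
    ¬ ∃ φ : ℝ → ℝ, ContDiff ℝ 1 φ ∧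
        (∀ z, (deriv φ z) ^ 2 = F (φ z)) ∧
        (∀ z, m < φ z) ∧
        (∃ z₁ z₂, φ z₁ ≠ φ z₂) ∧
        (∃ C : ℝ, ∀ z, |φ z| ≤ C) := by
  rintro ⟨φ, hφ, hode, hgt, -, C, hC⟩
  have hφd : Differentiable ℝ φ := hφ.differentiable one_ne_zero
  have hbdd : BddAbove (range φ) := ⟨C, forall_mem_range.2 fun z => (abs_le.1 (hC z)).2⟩
  have hφ'_ne : ∀ z ∈ univ, deriv φ z ≠ 0 := fun z _ h0 => by
    have := hode z
    rw [h0, zero_pow two_ne_zero] at this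
    exact (hFpos _ (hgt z)).ne this
  rcases hasDerivWithinAt_forall_lt_or_forall_gt_of_forall_ne convex_univ
    (fun z _ => (hφd z).hasDerivAt.hasDerivWithinAt) hφ'_ne with hneg | hpos
  · refine not_bddAbove_range_of_sq_deriv_eq_of_deriv_pos (φ := fun z => φ (-z)) hF.continuousOn
      hFpos (hφd.comp differentiable_neg) (fun z => ?_) (fun z => hgt (-z)) (fun z => ?_) ?_
    · rw [deriv_comp_neg, neg_sq, hode]
    · rw [deriv_comp_neg]; linarith [hneg (-z) trivial]
    · rwa [← neg_surjective.range_comp φ] at hbdd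
  · exact not_bddAbove_range_of_sq_deriv_eq_of_deriv_pos hF.continuousOn hFpos hφd hode hgt
      (fun z => hpos z trivial) hbdd

/-- Item 3 of Lenells' analysis: one simple zero with F positive above it gives no
bounded nonconstant solution. -/
theorem no_bounded_wave_above_simple_zero (F : ℝ → ℝ) (m : ℝ)
    (hF : ContDiffOn ℝ 1 F (Set.Ici m))
    (hFm : F m = 0) (hF'm : deriv F m ≠ 0)
    (hFpos : ∀ x, m < x → 0 < F x) :
    ¬ ∃ φ : ℝ → ℝ, ContDiff ℝ 1 φ ∧
        (∀ z, (deriv φ z) ^ 2 = F (φ z)) ∧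
        (∀ z, m < φ z) ∧
        (∃ z₁ z₂, φ z₁ ≠ φ z₂) ∧
        (∃ C : ℝ, ∀ z, |φ z| ≤ C) :=
  no_bounded_wave_above_simple_zero_general F m hF hFpos
end

section
/- Let F(φ) = (1/α²)·(φ - m)²(M - φ)/(c̃ - φ) with α ≠ 0 and z₀ = m < M = c̃ (double zero at m). Then F(φ) = (1/α²)(φ - m)² for all φ ≠ c̃, and the function φ(z) = m + (c̃ - m)e^{-|z|/|α|} satisfies (φ')² = F(φ) for all z ≠ 0, is continuous on ℝ with φ(0) = c̃, and tends to m exponentially as z → ±∞. -/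
/-!
Away from its crest the peakon is a pure exponential, `φ - m = (c̃ - m) e^{-|z|/|α|}`, so
`φ' = ∓(φ - m)/|α|` and `(φ')² = (φ - m)²/α²`: the zero of `F` at `M = c̃` cancels its pole,
leaving exactly this perfect square.
-/

open Filter Real Topology

noncomputable def peakon (m c a z : ℝ) : ℝ := m + (c - m) * exp (-|z| / |a|)

section

variable (m c a : ℝ)

lemma peakon_zero : peakon m c a 0 = c := by
  simp [peakon]

lemma peakon_sub_background (z : ℝ) :
    peakon m c a z - m = (c - m) * exp (-|a|⁻¹ * |z|) := by
  rw [peakon, add_sub_cancel_left, neg_div, div_eq_inv_mul, neg_mul]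

lemma continuous_peakon : Continuous (peakon m c a) := by
  unfold peakon
  fun_prop

lemma hasDerivAt_peakon {z : ℝ} (hz : z ≠ 0) :
    HasDerivAt (peakon m c a) (-(SignType.sign z : ℝ) / |a| * (peakon m c a z - m)) z := by
  have h := (((hasDerivAt_abs hz).neg.div_const |a|).exp.const_mul (c - m)).const_add m
  refine h.congr_deriv ?_
  rw [peakon, add_sub_cancel_left, Pi.neg_apply]
  ring

lemma deriv_peakon_sq {z : ℝ} (hz : z ≠ 0) :
    deriv (peakon m c a) z ^ 2 = 1 / a ^ 2 * (peakon m c a z - m) ^ 2 := by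
  have hsign : (SignType.sign z : ℝ) ^ 2 = 1 := by
    rcases hz.lt_or_gt with h | h <;> simp [h]
  rw [(hasDerivAt_peakon m c a hz).deriv, mul_pow, div_pow, neg_sq, hsign, sq_abs]

lemma tendsto_peakon_cocompact (ha : a ≠ 0) :
    Tendsto (peakon m c a) (cocompact ℝ) (𝓝 m) := by
  have hexponent : Tendsto (fun z : ℝ => -|z| / |a|) (cocompact ℝ) atBot :=
    (tendsto_neg_atTop_atBot.comp tendsto_norm_cocompact_atTop).atBot_div_const (abs_pos.2 ha)
  have h := (tendsto_const_nhds (x := m)).add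
    ((tendsto_exp_atBot.comp hexponent).const_mul (c - m))
  rwa [mul_zero, add_zero] at h

end

/-- Explicit peakon with decay for the DGH equation. -/
theorem peakon_with_decay (α m ct : ℝ) (hα : α ≠ 0) (hm : m < ct) :
    (∀ x : ℝ, x ≠ ct →
      (1 / α ^ 2) * ((x - m) ^ 2 * (ct - x) / (ct - x)) = (1 / α ^ 2) * (x - m) ^ 2) ∧
    (∀ z : ℝ, z ≠ 0 →
      (deriv (fun z : ℝ => m + (ct - m) * Real.exp (-|z| / |α|)) z) ^ 2
        = (1 / α ^ 2) * ((m + (ct - m) * Real.exp (-|z| / |α|)) - m) ^ 2) ∧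
    Continuous (fun z : ℝ => m + (ct - m) * Real.exp (-|z| / |α|)) ∧
    (m + (ct - m) * Real.exp (-|(0 : ℝ)| / |α|) = ct) ∧
    (∃ C > (0 : ℝ), ∃ lam > (0 : ℝ), ∀ z : ℝ,
      |(m + (ct - m) * Real.exp (-|z| / |α|)) - m| ≤ C * Real.exp (-lam * |z|)) ∧
    Tendsto (fun z : ℝ => m + (ct - m) * Real.exp (-|z| / |α|)) atTop (nhds m) ∧
    Tendsto (fun z : ℝ => m + (ct - m) * Real.exp (-|z| / |α|)) atBot (nhds m) := by
  have hdecay := tendsto_peakon_cocompact m ct α hα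
  refine ⟨fun x hx => ?_, fun z hz => deriv_peakon_sq m ct α hz, continuous_peakon m ct α,
    peakon_zero m ct α, ⟨ct - m, sub_pos.2 hm, |α|⁻¹, by positivity, fun z => ?_⟩,
    hdecay.mono_left atTop_le_cocompact, hdecay.mono_left atBot_le_cocompact⟩
  · rw [mul_div_cancel_right₀ _ (sub_ne_zero.2 hx.symm)]
  · rw [← peakon, peakon_sub_background, abs_mul, abs_of_pos (sub_pos.2 hm),
      abs_of_pos (exp_pos _)]
end

section
/- The function φ(z) = m + (M - m)·sech²(√((M - m)/(4γ))·z), defined for γ > 0 and z₀ = m < M with z₀ = c - c₀ - M - m (equivalently c - c₀ = M + 2m), satisfies (φ')² = (1/γ)(M - φ)(φ - m)² for all z ∈ ℝ, together with φ(0) = M, m < φ(z) ≤ M, and φ(z) → m as z → ±∞. -/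
/-!
With `s = sech (k z)` and `t = tanh (k z)` one has `φ - m = (M - m) s²`, `M - φ = (M - m) t²` and
`φ' = -2 k (M - m) s² t`, so `(φ')² = 4 k² / (M - m) · (M - φ) (φ - m)²`; the choice
`k² = (M - m) / (4 γ)` turns the coefficient into `1 / γ`. The bounds come from `0 < s² ≤ 1`,
and the decay to `m` from `cosh → ∞`.
-/

open Filter Real Topology

namespace Real

theorem tendsto_cosh_atTop : Tendsto cosh atTop atTop :=
  tendsto_atTop_mono (fun x => by rw [cosh_eq]; linarith [exp_pos (-x)])
    (tendsto_exp_atTop.atTop_div_const two_pos)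

theorem tendsto_cosh_cocompact : Tendsto cosh (cocompact ℝ) atTop :=
  (tendsto_cosh_atTop.comp tendsto_norm_cocompact_atTop).congr fun x => cosh_abs x

theorem inv_cosh_sq_pos (x : ℝ) : 0 < (1 / cosh x) ^ 2 := by
  have := cosh_pos x
  positivity

theorem inv_cosh_sq_le_one (x : ℝ) : (1 / cosh x) ^ 2 ≤ 1 :=
  pow_le_one₀ (by have := cosh_pos x; positivity)
    (div_le_one_of_le₀ (one_le_cosh x) (cosh_pos x).le)

theorem hasDerivAt_inv_cosh_sq_mul (k z : ℝ) :
    HasDerivAt (fun z => (1 / cosh (k * z)) ^ 2)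
      (-2 * k * sinh (k * z) / cosh (k * z) ^ 3) z := by
  have hcosh : HasDerivAt (fun z => cosh (k * z)) (sinh (k * z) * k) z :=
    (hasDerivAt_cosh (k * z)).comp z ((hasDerivAt_id z).const_mul k |>.congr_deriv (mul_one k))
  have hinv := (hcosh.fun_pow 2).inv (pow_pos (cosh_pos (k * z)) 2).ne'
  have hfun : (fun z => (1 / cosh (k * z)) ^ 2) = (fun z => cosh (k * z) ^ 2)⁻¹ := by
    ext; simp
  rw [hfun]
  refine hinv.congr_deriv ?_
  field_simp
  ring

end Real

section SechSqProfile

variable (m M k : ℝ)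

theorem sq_deriv_sech_sq_profile (hmM : m ≠ M) (z : ℝ) :
    (deriv (fun z => m + (M - m) * (1 / cosh (k * z)) ^ 2) z) ^ 2
      = 4 * k ^ 2 / (M - m) * (M - (m + (M - m) * (1 / cosh (k * z)) ^ 2))
          * ((m + (M - m) * (1 / cosh (k * z)) ^ 2) - m) ^ 2 := by
  rw [(((hasDerivAt_inv_cosh_sq_mul k z).const_mul (M - m)).const_add m).deriv]
  have hMm : M - m ≠ 0 := sub_ne_zero.mpr hmM.symm
  have := (cosh_pos (k * z)).ne'
  field_simp
  rw [sinh_sq]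
  ring

theorem tendsto_sech_sq_profile_cocompact (hk : k ≠ 0) :
    Tendsto (fun z => m + (M - m) * (1 / cosh (k * z)) ^ 2) (cocompact ℝ) (𝓝 m) := by
  have hcosh : Tendsto (fun z => cosh (k * z)) (cocompact ℝ) atTop :=
    tendsto_cosh_cocompact.comp (tendsto_cocompact_mul_left₀ hk)
  have hsech : Tendsto (fun z => (1 / cosh (k * z)) ^ 2) (cocompact ℝ) (𝓝 0) := by
    simpa using hcosh.inv_tendsto_atTop.pow 2
  simpa using (hsech.const_mul (M - m)).const_add m

end SechSqProfile

theorem kdv_solitary_wave_general (γ m M : ℝ) (hγ : 0 < γ) (hmM : m < M) :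
    (∀ z : ℝ,
      (deriv (fun z : ℝ =>
          m + (M - m) * (1 / Real.cosh (Real.sqrt ((M - m) / (4 * γ)) * z)) ^ 2) z) ^ 2
        = (1 / γ)
          * (M - (m + (M - m) * (1 / Real.cosh (Real.sqrt ((M - m) / (4 * γ)) * z)) ^ 2))
          * ((m + (M - m) * (1 / Real.cosh (Real.sqrt ((M - m) / (4 * γ)) * z)) ^ 2) - m) ^ 2) ∧
    (m + (M - m) * (1 / Real.cosh (Real.sqrt ((M - m) / (4 * γ)) * 0)) ^ 2 = M) ∧
    (∀ z : ℝ,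
      m < m + (M - m) * (1 / Real.cosh (Real.sqrt ((M - m) / (4 * γ)) * z)) ^ 2 ∧
      m + (M - m) * (1 / Real.cosh (Real.sqrt ((M - m) / (4 * γ)) * z)) ^ 2 ≤ M) ∧
    Tendsto (fun z : ℝ =>
        m + (M - m) * (1 / Real.cosh (Real.sqrt ((M - m) / (4 * γ)) * z)) ^ 2)
      atTop (nhds m) ∧
    Tendsto (fun z : ℝ =>
        m + (M - m) * (1 / Real.cosh (Real.sqrt ((M - m) / (4 * γ)) * z)) ^ 2)
      atBot (nhds m) := by
  set k := √((M - m) / (4 * γ))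
  have hMm : 0 < M - m := sub_pos.mpr hmM
  have hk2 : k ^ 2 = (M - m) / (4 * γ) := sq_sqrt (by positivity)
  have hk : k ≠ 0 := (sqrt_pos.mpr (by positivity)).ne'
  have hcoeff : 4 * k ^ 2 / (M - m) = 1 / γ := by
    rw [hk2]
    field_simp
  have hlim := tendsto_sech_sq_profile_cocompact m M k hk
  refine ⟨fun z => hcoeff ▸ sq_deriv_sech_sq_profile m M k hmM.ne z, by simp, fun z => ⟨?_, ?_⟩,
    hlim.mono_left atTop_le_cocompact, hlim.mono_left atBot_le_cocompact⟩
  · nlinarith [inv_cosh_sq_pos (k * z)]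
  · nlinarith [inv_cosh_sq_le_one (k * z)]

/-- Explicit KdV solitary wave realizing the smooth-with-decay case. -/
theorem kdv_solitary_wave (γ m M c c₀ : ℝ) (hγ : 0 < γ) (hmM : m < M)
    (hc : c - c₀ = M + 2 * m) :
    (∀ z : ℝ,
      (deriv (fun z : ℝ =>
          m + (M - m) * (1 / Real.cosh (Real.sqrt ((M - m) / (4 * γ)) * z)) ^ 2) z) ^ 2
        = (1 / γ)
          * (M - (m + (M - m) * (1 / Real.cosh (Real.sqrt ((M - m) / (4 * γ)) * z)) ^ 2))
          * ((m + (M - m) * (1 / Real.cosh (Real.sqrt ((M - m) / (4 * γ)) * z)) ^ 2) - m) ^ 2) ∧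
    (m + (M - m) * (1 / Real.cosh (Real.sqrt ((M - m) / (4 * γ)) * 0)) ^ 2 = M) ∧
    (∀ z : ℝ,
      m < m + (M - m) * (1 / Real.cosh (Real.sqrt ((M - m) / (4 * γ)) * z)) ^ 2 ∧
      m + (M - m) * (1 / Real.cosh (Real.sqrt ((M - m) / (4 * γ)) * z)) ^ 2 ≤ M) ∧
    Tendsto (fun z : ℝ =>
        m + (M - m) * (1 / Real.cosh (Real.sqrt ((M - m) / (4 * γ)) * z)) ^ 2)
      atTop (nhds m) ∧
    Tendsto (fun z : ℝ =>
        m + (M - m) * (1 / Real.cosh (Real.sqrt ((M - m) / (4 * γ)) * z)) ^ 2)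
      atBot (nhds m) :=
  kdv_solitary_wave_general γ m M hγ hmM
end
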